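/- Let d be a nonnegative travel-time function on N = {0} ∪ C with d(i,i) = 0 that satisfies the triangle inequality d(i,j) ≤ d(i,l) + d(l,j) for all i, l, j ∈ N, and let all processing times be zero (p_c = 0 for every customer c). Then for every feasible VRP-RPD schedule with makespan T there exists a partition of the n customers into at most m ordered sequences (each customer assigned to the vehicle performing its dropoff, ordered by dropoff time) whose maximum tour length is at most T. Consequently, the min-max VRP value is at most the optimal VRP-RPD makespan. -/

import Mathlib

/-!
Shortcutting. Along a feasible route the vehicle needs at least the travel time between
consecutive stops, so the closed path through all of its stops is no longer than its return time.
By the triangle inequality, deleting the pickup stops does not lengthen that path; what is left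
is the tour through the vehicle's dropoffs, so the dropoff sequences form a VRP solution of value
at most the makespan. Comparing the two infima also needs a feasible schedule whenever a
partition exists: one vehicle drops off and at once picks up at every customer in turn, with
consecutive operations spaced by a bound on all travel and processing times.
-/

namespace VRPRPD

/-- The kind of an operation at a customer: a dropoff or a pickup. -/
inductive OpKind : Type
  | drop
  | pick
deriving DecidableEq

/-- One scheduled operation of a vehicle: the customer served, the kind of
operation, and the arrival and departure times of the vehicle at the customer. -/
structure Entry (n : ℕ) : Type where
  cust : Fin n
  kind : OpKind
  arr : ℝ
  dep : ℝ

/-- A schedule assigns to each of the `m` vehicles a finite sequence of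
timed operations. -/
abbrev Schedule (n m : ℕ) : Type := Fin m → List (Entry n)

/-- The location of customer `c` in `N = {0} ∪ C`, where the depot is `0` and
customer `c` is coded as location `c + 1` in `Fin (n+1)`. -/
def loc {n : ℕ} (c : Fin n) : Fin (n + 1) := c.succ

/-- Total number of operations of kind `k` performed at customer `c` over all vehicles. -/
def countOp {n m : ℕ} (S : Schedule n m) (c : Fin n) (k : OpKind) : ℕ :=
  ∑ v : Fin m, (S v).countP (fun e => decide (e.cust = c ∧ e.kind = k))

/-- The load (number of resources carried) of a vehicle after performing the
operations in the list `l`, having started at the depot with `kcap` resources: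
a dropoff decreases the load by one, a pickup increases it by one. -/
def loadAfter {n : ℕ} (kcap : ℕ) (l : List (Entry n)) : ℤ :=
  (kcap : ℤ) - (l.countP (fun e => decide (e.kind = OpKind.drop)) : ℤ)
    + (l.countP (fun e => decide (e.kind = OpKind.pick)) : ℤ)

/-- Feasibility of a VRP-RPD schedule for travel times `d`, processing times `p`
and vehicle capacity `kcap`: each customer gets exactly one dropoff and one pickup
(possibly by different vehicles); each vehicle starts at the depot at time `0`
carrying `kcap` resources and travels between consecutive operation locations
taking at least the corresponding travel time (waiting allowed); the load stays
between `0` and `kcap` along each route (so a dropoff requires load at least one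
and a pickup load at most `kcap - 1`); and the pickup of customer `c` (which
occurs at the departure of the pickup vehicle) happens no earlier than `p c` time
units after its dropoff (which occurs at the arrival of the dropoff vehicle). -/
structure Feasible {n m : ℕ} (d : Fin (n + 1) → Fin (n + 1) → ℝ) (p : Fin n → ℝ)
    (kcap : ℕ) (S : Schedule n m) : Prop where
  drop_once : ∀ c : Fin n, countOp S c OpKind.drop = 1
  pick_once : ∀ c : Fin n, countOp S c OpKind.pick = 1
  arr_le_dep : ∀ v : Fin m, ∀ e ∈ S v, e.arr ≤ e.dep
  first_arr : ∀ v : Fin m, ∀ e ∈ (S v).head?, d 0 (loc e.cust) ≤ e.arr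
  travel : ∀ v : Fin m, ∀ r : ℕ, (h : r + 1 < (S v).length) →
    ((S v).get ⟨r, Nat.lt_of_succ_lt h⟩).dep
      + d (loc ((S v).get ⟨r, Nat.lt_of_succ_lt h⟩).cust)
          (loc ((S v).get ⟨r + 1, h⟩).cust)
      ≤ ((S v).get ⟨r + 1, h⟩).arr
  load_nonneg : ∀ v : Fin m, ∀ r : ℕ, 0 ≤ loadAfter kcap ((S v).take r)
  load_le_cap : ∀ v : Fin m, ∀ r : ℕ, loadAfter kcap ((S v).take r) ≤ (kcap : ℤ)
  precedence : ∀ (c : Fin n) (v w : Fin m) (eD eP : Entry n),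
    eD ∈ S v → eP ∈ S w → eD.cust = c → eD.kind = OpKind.drop →
    eP.cust = c → eP.kind = OpKind.pick → eD.arr + p c ≤ eP.dep

/-- The time at which vehicle `v` returns to the depot: the departure time from
its last operation plus the travel time back to the depot (`0` if the vehicle
performs no operation and stays at the depot). -/
def returnTime {n m : ℕ} (d : Fin (n + 1) → Fin (n + 1) → ℝ) (S : Schedule n m)
    (v : Fin m) : ℝ :=
  match (S v).getLast? with
  | none => 0
  | some e => e.dep + d (loc e.cust) 0

/-- The makespan of a schedule: the maximum over vehicles of the depot return time. -/
def makespan {n m : ℕ} (d : Fin (n + 1) → Fin (n + 1) → ℝ) (S : Schedule n m) : ℝ :=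
  ((List.finRange m).map (returnTime d S)).foldr max 0

/-- Length of a path through a list of locations: the sum of the travel times of
consecutive pairs. -/
def pathLen {n : ℕ} (d : Fin (n + 1) → Fin (n + 1) → ℝ) : List (Fin (n + 1)) → ℝ
  | [] => 0
  | [_] => 0
  | a :: b :: rest => d a b + pathLen d (b :: rest)

/-- Tour length of an ordered sequence `c₁, …, c_L` of customers:
`d(0,c₁) + Σ d(cᵢ,cᵢ₊₁) + d(c_L,0)`, and `0` for the empty sequence. -/
def tourLen {n : ℕ} (d : Fin (n + 1) → Fin (n + 1) → ℝ) (l : List (Fin n)) : ℝ :=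
  match l with
  | [] => 0
  | _ => pathLen d ((0 : Fin (n + 1)) :: l.map loc ++ [(0 : Fin (n + 1))])

/-- `routes` is a partition of the `n` customers into at most `m` ordered
sequences: every customer occurs exactly once among all the sequences. -/
def IsPartition {n m : ℕ} (routes : Fin m → List (Fin n)) : Prop :=
  ∀ c : Fin n, (∑ v : Fin m, (routes v).count c) = 1

/-- The maximum tour length over the sequences of a partition. -/
def maxTour {n m : ℕ} (d : Fin (n + 1) → Fin (n + 1) → ℝ)
    (routes : Fin m → List (Fin n)) : ℝ :=
  ((List.finRange m).map (fun v => tourLen d (routes v))).foldr max 0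

/-- The min-max VRP value: the minimum, over partitions of the customers into at
most `m` ordered sequences, of the maximum tour length of a sequence. -/
noncomputable def minmaxVRP (n m : ℕ) (d : Fin (n + 1) → Fin (n + 1) → ℝ) : ℝ :=
  sInf {T : ℝ | ∃ routes : Fin m → List (Fin n), IsPartition routes ∧ maxTour d routes = T}

/-- The optimal VRP-RPD makespan: the minimum makespan over feasible schedules. -/
noncomputable def optMakespan (n m : ℕ) (d : Fin (n + 1) → Fin (n + 1) → ℝ)
    (p : Fin n → ℝ) (kcap : ℕ) : ℝ :=
  sInf {T : ℝ | ∃ S : Schedule n m, Feasible d p kcap S ∧ makespan d S = T}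

end VRPRPD

namespace VRPRPD

/-- The partition of the customers induced by a schedule: each customer is
assigned to the vehicle performing its dropoff, ordered by dropoff time
(dropoffs appear along a vehicle's route in nondecreasing time order). -/
def dropRoutes {n m : ℕ} (S : Schedule n m) : Fin m → List (Fin n) :=
  fun v => ((S v).filter (fun e => decide (e.kind = OpKind.drop))).map Entry.cust


theorem _root_.List.self_le_foldr_max {α : Type*} [LinearOrder α] (b : α) (l : List α) :
    b ≤ l.foldr max b := by
  induction l with
  | nil => exact le_rfl
  | cons a l ih => exact le_max_of_le_right ih

theorem _root_.List.foldr_max_le {α : Type*} [LinearOrder α] {l : List α} {a b : α}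
    (hb : b ≤ a) (h : ∀ x ∈ l, x ≤ a) : l.foldr max b ≤ a := by
  induction l with
  | nil => exact hb
  | cons x l ih => exact max_le (h x List.mem_cons_self) (ih fun y hy => h y (.tail x hy))

theorem sInf_le_sInf_of_forall_exists_le {A B : Set ℝ} (hA : ∀ a ∈ A, 0 ≤ a)
    (hne : A.Nonempty → B.Nonempty) (h : ∀ b ∈ B, ∃ a ∈ A, a ≤ b) :
    sInf A ≤ sInf B := by
  rcases A.eq_empty_or_nonempty with rfl | hA'
  · rw [Real.sInf_empty]
    refine Real.sInf_nonneg fun b hb => ?_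
    obtain ⟨a, ha, hab⟩ := h b hb
    exact (hA a ha).trans hab
  · refine le_csInf (hne hA') fun b hb => ?_
    obtain ⟨a, ha, hab⟩ := h b hb
    exact (csInf_le ⟨0, hA⟩ ha).trans hab

section Shortcut

variable {n m kcap : ℕ} {d : Fin (n + 1) → Fin (n + 1) → ℝ} {p : Fin n → ℝ}

theorem pathLen_cons_le_of_ne_nil (hd_tri : ∀ i l j, d i j ≤ d i l + d l j)
    (a x : Fin (n + 1)) {l : List (Fin (n + 1))} (hl : l ≠ []) :
    pathLen d (a :: l) ≤ d a x + pathLen d (x :: l) := by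
  obtain ⟨y, l, rfl⟩ := List.exists_cons_of_ne_nil hl
  change d a y + pathLen d (y :: l) ≤ d a x + (d x y + pathLen d (y :: l))
  linarith [hd_tri a x y]

theorem pathLen_le_of_sublist (hd_tri : ∀ i l j, d i j ≤ d i l + d l j)
    {l₁ l₂ : List (Fin (n + 1))} (h : l₁.Sublist l₂) (a b : Fin (n + 1)) :
    pathLen d (a :: (l₁ ++ [b])) ≤ pathLen d (a :: (l₂ ++ [b])) := by
  induction h generalizing a with
  | slnil => exact le_rfl
  | @cons l₁ l₂ x _ ih =>
    calc pathLen d (a :: (l₁ ++ [b])) ≤ pathLen d (a :: (l₂ ++ [b])) := ih a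
      _ ≤ d a x + pathLen d (x :: (l₂ ++ [b])) := pathLen_cons_le_of_ne_nil hd_tri a x (by simp)
  | @cons_cons l₁ l₂ x _ ih => exact add_le_add_right (ih x) _

def Follows (d : Fin (n + 1) → Fin (n + 1) → ℝ) (e₁ e₂ : Entry n) : Prop :=
  e₁.dep + d (loc e₁.cust) (loc e₂.cust) ≤ e₂.arr

theorem arr_add_pathLen_le_of_isChain (e : Entry n) (l : List (Entry n))
    (hchain : (e :: l).IsChain (Follows d)) (harr : ∀ x ∈ e :: l, x.arr ≤ x.dep) :
    e.arr + pathLen d ((e :: l).map (loc ∘ Entry.cust) ++ [0]) ≤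
      ((e :: l).getLast (List.cons_ne_nil e l)).dep +
        d (loc ((e :: l).getLast (List.cons_ne_nil e l)).cust) 0 := by
  induction l generalizing e with
  | nil =>
    change e.arr + (d (loc e.cust) 0 + 0) ≤ e.dep + d (loc e.cust) 0
    linarith [harr e List.mem_cons_self]
  | cons f l ih =>
    rw [List.isChain_cons_cons] at hchain
    have hf := ih f hchain.2 fun x hx => harr x (.tail e hx)
    rw [List.getLast_cons (List.cons_ne_nil f l)]
    change e.arr + (d (loc e.cust) (loc f.cust) +
      pathLen d ((f :: l).map (loc ∘ Entry.cust) ++ [0])) ≤ _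
    have hef : e.dep + d (loc e.cust) (loc f.cust) ≤ f.arr := hchain.1
    linarith [harr e List.mem_cons_self]

theorem Feasible.isChain_follows {S : Schedule n m} (hS : Feasible d p kcap S) (v : Fin m) :
    (S v).IsChain (Follows d) :=
  List.isChain_iff_getElem.mpr fun r hr => by simpa [Follows] using hS.travel v r hr

theorem Feasible.pathLen_le_returnTime {S : Schedule n m} (hS : Feasible d p kcap S)
    {v : Fin m} (hv : S v ≠ []) :
    pathLen d (0 :: ((S v).map (loc ∘ Entry.cust) ++ [0])) ≤ returnTime d S v := by
  obtain ⟨e, l, hel⟩ := List.exists_cons_of_ne_nil hv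
  have hfirst : d 0 (loc e.cust) ≤ e.arr := hS.first_arr v e (by simp [hel])
  have hroute := arr_add_pathLen_le_of_isChain e l (hel ▸ hS.isChain_follows v)
    (hel ▸ hS.arr_le_dep v)
  rw [returnTime, hel, List.getLast?_eq_some_getLast (List.cons_ne_nil e l)]
  change d 0 (loc e.cust) + pathLen d ((e :: l).map (loc ∘ Entry.cust) ++ [0]) ≤ _
  linarith

theorem count_dropRoutes (S : Schedule n m) (v : Fin m) (c : Fin n) :
    (dropRoutes S v).count c =
      (S v).countP (fun e => decide (e.cust = c ∧ e.kind = OpKind.drop)) := by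
  rw [dropRoutes, List.count_eq_countP, List.countP_map, List.countP_filter]
  refine List.countP_congr fun e _ => ?_
  simp [and_comm]

theorem Feasible.isPartition_dropRoutes {S : Schedule n m} (hS : Feasible d p kcap S) :
    IsPartition (dropRoutes S) := fun c => by
  simpa only [count_dropRoutes, countOp] using hS.drop_once c

theorem Feasible.tourLen_dropRoutes_le_returnTime (hd_tri : ∀ i l j, d i j ≤ d i l + d l j)
    {S : Schedule n m} (hS : Feasible d p kcap S) {v : Fin m} (hv : dropRoutes S v ≠ []) :
    tourLen d (dropRoutes S v) ≤ returnTime d S v := by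
  have hsub : ((dropRoutes S v).map loc).Sublist ((S v).map (loc ∘ Entry.cust)) := by
    rw [dropRoutes, List.map_map]
    exact (S v).filter_sublist.map _
  have hSv : S v ≠ [] := by
    rintro h
    simp [dropRoutes, h] at hv
  calc tourLen d (dropRoutes S v)
      = pathLen d (0 :: ((dropRoutes S v).map loc ++ [0])) := by
        obtain ⟨c, cs, h⟩ := List.exists_cons_of_ne_nil hv
        rw [h]; rfl
    _ ≤ pathLen d (0 :: ((S v).map (loc ∘ Entry.cust) ++ [0])) :=
        pathLen_le_of_sublist hd_tri hsub 0 0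
    _ ≤ returnTime d S v := hS.pathLen_le_returnTime hSv

theorem Feasible.maxTour_dropRoutes_le_makespan (hd_tri : ∀ i l j, d i j ≤ d i l + d l j)
    {S : Schedule n m} (hS : Feasible d p kcap S) :
    maxTour d (dropRoutes S) ≤ makespan d S := by
  have hnonneg : 0 ≤ makespan d S := List.self_le_foldr_max _ _
  refine List.foldr_max_le hnonneg ?_
  simp only [List.mem_map, List.mem_finRange, true_and, forall_exists_index,
    forall_apply_eq_imp_iff]
  intro v
  by_cases hv : dropRoutes S v = []
  · simpa [hv, tourLen] using hnonneg
  · exact (hS.tourLen_dropRoutes_le_returnTime hd_tri hv).trans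
      (List.le_max_of_le' 0 (List.mem_map_of_mem (List.mem_finRange v)) le_rfl)

end Shortcut

section Construction

variable {n m kcap : ℕ} {d : Fin (n + 1) → Fin (n + 1) → ℝ} {p : Fin n → ℝ}

def slot (c : Fin n) : OpKind → ℕ
  | .drop => 2 * c
  | .pick => 2 * c + 1

def visit (K : ℝ) (c : Fin n) (k : OpKind) : Entry n :=
  ⟨c, k, (slot c k + 1) * K, (slot c k + 1) * K⟩

def visits (K : ℝ) (c : Fin n) : List (Entry n) :=
  [visit K c .drop, visit K c .pick]

def serveInTurn (K : ℝ) : List (Entry n) :=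
  (List.finRange n).flatMap (visits K)

def singleVehicle (L : List (Entry n)) : Schedule n m :=
  fun v => if (v : ℕ) = 0 then L else []

theorem eq_visit_of_mem_serveInTurn {K : ℝ} {e : Entry n} (he : e ∈ serveInTurn K) :
    e = visit K e.cust e.kind := by
  simp only [serveInTurn, visits, List.mem_flatMap, List.mem_cons, List.not_mem_nil,
    or_false] at he
  obtain ⟨c, -, rfl | rfl⟩ := he <;> rfl

theorem countP_serveInTurn (K : ℝ) (c : Fin n) (k : OpKind) :
    (serveInTurn K).countP (fun e => decide (e.cust = c ∧ e.kind = k)) = 1 := by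
  have hvisits : ∀ c', (visits K c').countP (fun e => decide (e.cust = c ∧ e.kind = k)) =
      if c' = c then 1 else 0 := by
    intro c'
    by_cases h : c' = c <;> cases k <;> simp [visits, visit, h]
  rw [serveInTurn, List.countP_flatMap, ← Fin.sum_univ_def]
  simp only [Function.comp_apply, hvisits, Finset.sum_ite_eq', Finset.mem_univ, if_true]

theorem pairwise_slot_lt_serveInTurn (K : ℝ) :
    (serveInTurn K).Pairwise
      (fun e₁ e₂ : Entry n => slot e₁.cust e₁.kind < slot e₂.cust e₂.kind) := by
  refine List.pairwise_flatMap.mpr ⟨fun c _ => by simp [visits, visit, slot], ?_⟩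
  refine (List.pairwise_lt_finRange n).imp fun {c c'} hcc' => ?_
  have : (c : ℕ) < c' := hcc'
  simp only [visits, visit, slot, List.mem_cons, List.not_mem_nil, or_false]
  rintro _ (rfl | rfl) _ (rfl | rfl) <;> dsimp only <;> omega

theorem isChain_follows_serveInTurn {K : ℝ} (hK : 0 ≤ K) (hd : ∀ i j, d i j ≤ K) :
    (serveInTurn K).IsChain (Follows d) := by
  refine ((pairwise_slot_lt_serveInTurn K).imp_of_mem fun {e₁ e₂} he₁ he₂ hlt => ?_).isChain
  rw [eq_visit_of_mem_serveInTurn he₁, eq_visit_of_mem_serveInTurn he₂] at hlt ⊢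
  have hslot : ((slot e₁.cust e₁.kind : ℕ) : ℝ) + 1 ≤ slot e₂.cust e₂.kind := by
    exact_mod_cast hlt
  have := hd (loc e₁.cust) (loc e₂.cust)
  simp only [Follows, visit]
  nlinarith

theorem loadAfter_take_flatMap_visits (kcap : ℕ) (K : ℝ) :
    ∀ (cs : List (Fin n)) (r : ℕ),
      (kcap : ℤ) - 1 ≤ loadAfter kcap ((cs.flatMap (visits K)).take r) ∧
        loadAfter kcap ((cs.flatMap (visits K)).take r) ≤ kcap
  | [], r => by simp [loadAfter]
  | c :: cs, 0 => by simp [loadAfter]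
  | c :: cs, 1 => by simp [loadAfter, visits, visit]
  | c :: cs, r + 2 => by
    have := loadAfter_take_flatMap_visits kcap K cs r
    simp [loadAfter, visits, visit] at this ⊢
    omega

theorem mem_of_mem_singleVehicle {L : List (Entry n)} {v : Fin m} {e : Entry n}
    (he : e ∈ singleVehicle L v) : e ∈ L := by
  unfold singleVehicle at he
  split_ifs at he
  · exact he
  · simp at he

theorem sum_countP_singleVehicle (hm : 0 < m) (L : List (Entry n)) (q : Entry n → Bool) :
    ∑ v : Fin m, (singleVehicle L v).countP q = L.countP q := by
  obtain ⟨m, rfl⟩ := Nat.exists_eq_succ_of_ne_zero hm.ne'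
  simp [Fin.sum_univ_succ, singleVehicle]

theorem feasible_singleVehicle_serveInTurn (hk1 : 1 ≤ kcap) (hm : 0 < n → 0 < m) {K : ℝ}
    (hK : 0 ≤ K) (hd : ∀ i j, d i j ≤ K) (hp : ∀ c, p c ≤ K) :
    Feasible d p kcap (singleVehicle (serveInTurn K) : Schedule n m) where
  drop_once c := by rw [countOp, sum_countP_singleVehicle (hm c.pos), countP_serveInTurn]
  pick_once c := by rw [countOp, sum_countP_singleVehicle (hm c.pos), countP_serveInTurn]
  arr_le_dep v e he := by
    rw [eq_visit_of_mem_serveInTurn (mem_of_mem_singleVehicle he)]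
    exact le_rfl
  first_arr v e he := by
    rw [eq_visit_of_mem_serveInTurn (mem_of_mem_singleVehicle (List.mem_of_mem_head? he))]
    have : K ≤ (slot e.cust e.kind + 1) * K := le_mul_of_one_le_left hK (by simp)
    exact (hd _ _).trans this
  travel v r hr := by
    have hchain : (singleVehicle (serveInTurn K) v).IsChain (Follows d) := by
      unfold singleVehicle
      split_ifs
      · exact isChain_follows_serveInTurn hK hd
      · exact List.isChain_nil
    simpa [Follows] using List.isChain_iff_getElem.mp hchain r hr
  load_nonneg v r := by
    unfold singleVehicle
    split_ifs
    · have := (loadAfter_take_flatMap_visits kcap K (List.finRange n) r).1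
      unfold serveInTurn
      omega
    · simp [loadAfter]
  load_le_cap v r := by
    unfold singleVehicle
    split_ifs
    · exact (loadAfter_take_flatMap_visits kcap K (List.finRange n) r).2
    · simp [loadAfter]
  precedence c v w eD eP hD hP hDc hDk hPc hPk := by
    rw [eq_visit_of_mem_serveInTurn (mem_of_mem_singleVehicle hD),
      eq_visit_of_mem_serveInTurn (mem_of_mem_singleVehicle hP), hDc, hDk, hPc, hPk]
    simp only [visit, slot]
    push_cast
    linarith [hp c]

end Construction

theorem exists_feasible {n m kcap : ℕ} (d : Fin (n + 1) → Fin (n + 1) → ℝ) (p : Fin n → ℝ)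
    (hk1 : 1 ≤ kcap) (hm : 0 < n → 0 < m) : ∃ S : Schedule n m, Feasible d p kcap S := by
  obtain ⟨Kd, hKd⟩ := Finite.bddAbove_range (Function.uncurry d)
  obtain ⟨Kp, hKp⟩ := Finite.bddAbove_range p
  exact ⟨_, feasible_singleVehicle_serveInTurn hk1 hm (le_max_left 0 (max Kd Kp))
    (fun i j => (hKd ⟨(i, j), rfl⟩).trans (by simp))
    (fun c => (hKp ⟨c, rfl⟩).trans (by simp))⟩

theorem IsPartition.pos_of_pos {n m : ℕ} {routes : Fin m → List (Fin n)}
    (h : IsPartition routes) (hn : 0 < n) : 0 < m := by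
  by_contra! hm
  obtain rfl : m = 0 := by omega
  simpa using h ⟨0, hn⟩

theorem maxTour_nonneg {n m : ℕ} (d : Fin (n + 1) → Fin (n + 1) → ℝ)
    (routes : Fin m → List (Fin n)) : 0 ≤ maxTour d routes :=
  List.self_le_foldr_max _ _

theorem minmaxVRP_le_optMakespan_general (n m kcap : ℕ)
    (d : Fin (n + 1) → Fin (n + 1) → ℝ) (p : Fin n → ℝ)
    (hd_tri : ∀ i l j, d i j ≤ d i l + d l j)
    (hk1 : 1 ≤ kcap) :
    (∀ S : Schedule n m, Feasible d p kcap S →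
        IsPartition (dropRoutes S) ∧ maxTour d (dropRoutes S) ≤ makespan d S) ∧
      minmaxVRP n m d ≤ optMakespan n m d p kcap := by
  have shortcut : ∀ S : Schedule n m, Feasible d p kcap S →
      IsPartition (dropRoutes S) ∧ maxTour d (dropRoutes S) ≤ makespan d S :=
    fun S hS => ⟨hS.isPartition_dropRoutes, hS.maxTour_dropRoutes_le_makespan hd_tri⟩
  refine ⟨shortcut, sInf_le_sInf_of_forall_exists_le ?_ ?_ ?_⟩
  · rintro _ ⟨routes, -, rfl⟩
    exact maxTour_nonneg d routes
  · rintro ⟨_, routes, hpart, -⟩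
    obtain ⟨S, hS⟩ := exists_feasible d p hk1 hpart.pos_of_pos
    exact ⟨_, S, hS, rfl⟩
  · rintro _ ⟨S, hS, rfl⟩
    exact ⟨_, ⟨dropRoutes S, (shortcut S hS).1, rfl⟩, (shortcut S hS).2⟩

/-- With nonnegative travel times vanishing on the diagonal and
satisfying the triangle inequality, and zero processing times, every feasible
VRP-RPD schedule induces a partition of the customers into at most `m` ordered
sequences (each customer assigned to the vehicle performing its dropoff, ordered
by dropoff time) whose maximum tour length is at most the schedule's makespan.
Consequently, the min-max VRP value is at most the optimal VRP-RPD makespan. -/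
theorem minmaxVRP_le_optMakespan (n m kcap : ℕ)
    (d : Fin (n + 1) → Fin (n + 1) → ℝ) (p : Fin n → ℝ)
    (hd_nonneg : ∀ i j, 0 ≤ d i j) (hd_refl : ∀ i, d i i = 0)
    (hd_tri : ∀ i l j, d i j ≤ d i l + d l j)
    (hp : ∀ c, p c = 0) (hk1 : 1 ≤ kcap) :
    (∀ S : Schedule n m, Feasible d p kcap S →
        IsPartition (dropRoutes S) ∧ maxTour d (dropRoutes S) ≤ makespan d S) ∧
      minmaxVRP n m d ≤ optMakespan n m d p kcap :=
  minmaxVRP_le_optMakespan_general n m kcap d p hd_tri hk1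

end VRPRPD
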